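/- If G is an n-vertex graph with no induced subgraph isomorphic to K₄⁻ (the complete graph on 4 vertices with one edge deleted), then α₁(G) + τ(G) ≤ n²/4. -/

import Mathlib

open Finset

/-- `A` is a triangle-independent set of edges of `G`: it consists of edges of `G`
and contains at most one edge from each triangle of `G`. -/
def TriIndep {V : Type*} (G : SimpleGraph V) (A : Finset (Sym2 V)) : Prop :=
  (A : Set (Sym2 V)) ⊆ G.edgeSet ∧
    ∀ x y z : V, G.Adj x y → G.Adj y z → G.Adj x z →
      ¬(s(x, y) ∈ A ∧ s(y, z) ∈ A)

/-- `α₁ G`: the maximum size of a triangle-independent set of edges of `G`. -/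
noncomputable def alpha1 {V : Type*} [Fintype V] (G : SimpleGraph V) : ℕ :=
  sSup {k | ∃ A : Finset (Sym2 V), TriIndep G A ∧ A.card = k}

/-- `τ G`: the minimum size of a set of edges whose deletion makes `G` triangle-free. -/
noncomputable def tau {V : Type*} [Fintype V] (G : SimpleGraph V) : ℕ :=
  sInf {k | ∃ X : Finset (Sym2 V), (X : Set (Sym2 V)) ⊆ G.edgeSet ∧
    (G.deleteEdges (X : Set (Sym2 V))).CliqueFree 3 ∧ X.card = k}

/-- `τ_B G`: the minimum size of a set of edges whose deletion makes `G` bipartite. -/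
noncomputable def tauB {V : Type*} [Fintype V] (G : SimpleGraph V) : ℕ :=
  sInf {k | ∃ X : Finset (Sym2 V), (X : Set (Sym2 V)) ⊆ G.edgeSet ∧
    (G.deleteEdges (X : Set (Sym2 V))).Colorable 2 ∧ X.card = k}

open scoped Classical in
/-- The edge cut `[S, S̄]`: the set of edges of `G` with one endpoint in `S`
and the other outside `S`. -/
noncomputable def edgeCut {V : Type*} [Fintype V] (G : SimpleGraph V) (S : Finset V) :
    Finset (Sym2 V) :=
  G.edgeFinset.filter (fun e => ∃ x ∈ S, ∃ y ∉ S, e = s(x, y))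

open scoped Classical in
/-- The number of edges of `G`. -/
noncomputable def edgeCount {V : Type*} [Fintype V] (G : SimpleGraph V) : ℕ :=
  G.edgeFinset.card

/-- The independence number of `G`. -/
noncomputable def indepNum {V : Type*} [Fintype V] (G : SimpleGraph V) : ℕ :=
  sSup {k | ∃ I : Finset V, (∀ x ∈ I, ∀ y ∈ I, ¬G.Adj x y) ∧ I.card = k}

/-- `K₄⁻`: the complete graph on 4 vertices with one edge deleted. -/
def K4minus : SimpleGraph (Fin 4) := (SimpleGraph.completeGraph (Fin 4)).deleteEdges {s(0, 1)}

/-!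
In a graph with no induced `K₄⁻`, two triangles sharing an edge span a `K₄`. Hence every edge
lies in a unique maximal clique, its block, and the blocks partition the edge set. Split each
block `Q` into halves of sizes `⌊q/2⌋` and `⌈q/2⌉` and delete the edges inside the halves: the
deleted set `X` meets every triangle, since a triangle lies in a single block. A
triangle-independent set `A` meets each block in a matching, so in at most `⌊q/2⌋` edges, and
`⌊q/2⌋ + 2 (C(⌊q/2⌋, 2) + C(⌈q/2⌉, 2)) = C(q, 2)`. Summing over blocks, `|A| + 2|X| ≤ e(G)`,
that is `|A| + |X| ≤ e(G - X)`, and Mantel's theorem bounds `e(G - X)` by `n²/4`.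
-/

theorem Nat.div_two_add_two_mul_choose_two_add_choose_two (n : ℕ) :
    n / 2 + 2 * ((n / 2).choose 2 + (n - n / 2).choose 2) = n.choose 2 := by
  rcases Nat.even_or_odd' n with ⟨k, rfl | rfl⟩
  · rw [show 2 * k / 2 = k by omega, show 2 * k - k = k by omega]
    qify; push_cast [Nat.cast_choose_two]; ring
  · rw [show (2 * k + 1) / 2 = k by omega, show 2 * k + 1 - k = k + 1 by omega]
    qify; push_cast [Nat.cast_choose_two]; ring

namespace SimpleGraph

variable {V : Type*} {G : SimpleGraph V}

theorem CliqueFree.four_mul_card_edgeFinset_le [Fintype V] [DecidableRel G.Adj]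
    (h : G.CliqueFree 3) : 4 * #G.edgeFinset ≤ Fintype.card V ^ 2 := by
  have := h.card_edgeFinset_le (r := 2)
  rcases Nat.mod_two_eq_zero_or_one (Fintype.card V) with h2 | h2 <;>
    simp [h2] at this <;> omega

theorem IsClique.card_edgeFinset_inter_sym2 [Fintype V] [DecidableEq V] [DecidableRel G.Adj]
    {s : Finset V} (hs : G.IsClique (s : Set V)) : #(G.edgeFinset ∩ s.sym2) = (#s).choose 2 := by
  rw [← filter_edgeFinset_toFinset_subset, card_filter_edgeFinset_toFinset_subset,
    ← Fintype.card_coe s, ← card_edgeFinset_top_eq_card_choose_two]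
  congr!
  exact induce_eq_top.2 hs

theorem _root_.TriIndep.card_inter_sym2_le [DecidableEq V] {A : Finset (Sym2 V)}
    (hA : TriIndep G A) {s : Finset V} (hs : G.IsClique (s : Set V)) :
    #(A ∩ s.sym2) ≤ #s / 2 := by
  have hdisj : ((A ∩ s.sym2 : Finset (Sym2 V)) : Set (Sym2 V)).PairwiseDisjoint
      Sym2.toFinset := by
    intro e he e' he' hne
    rw [Function.onFun, Finset.disjoint_left]
    intro w hw hw'
    simp only [coe_inter, Set.mem_inter_iff, mem_coe, mem_sym2_iff] at he he'
    obtain ⟨c, rfl⟩ := Sym2.mem_iff_exists.1 (Sym2.mem_toFinset.1 hw)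
    obtain ⟨c', rfl⟩ := Sym2.mem_iff_exists.1 (Sym2.mem_toFinset.1 hw')
    have hwc : G.Adj w c := hA.1 he.1
    have hwc' : G.Adj w c' := hA.1 he'.1
    have hcc' : c ≠ c' := by rintro rfl; exact hne rfl
    exact hA.2 c w c' hwc.symm hwc' (hs (he.2 c (Sym2.mem_mk_right w c))
      (he'.2 c' (Sym2.mem_mk_right w c')) hcc') ⟨Sym2.eq_swap ▸ he.1, he'.1⟩
  have hsub : (A ∩ s.sym2).biUnion Sym2.toFinset ⊆ s := by
    simp only [biUnion_subset, mem_inter, mem_sym2_iff]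
    exact fun e he v hv => he.2 v (Sym2.mem_toFinset.1 hv)
  have htwo : ∀ e ∈ A ∩ s.sym2, #e.toFinset = 2 := fun e he =>
    Sym2.card_toFinset_of_not_isDiag e (not_isDiag_of_mem_edgeSet G (hA.1 (mem_inter.1 he).1))
  have := card_le_card hsub
  rw [card_biUnion hdisj, sum_congr rfl htwo, sum_const, smul_eq_mul] at this
  omega

theorem adj_of_isEmpty_k4minus_embedding (hG : IsEmpty (K4minus ↪g G)) {a b c d : V}
    (hab : G.Adj a b) (hac : G.Adj a c) (hbc : G.Adj b c) (had : G.Adj a d) (hbd : G.Adj b d)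
    (hcd : c ≠ d) : G.Adj c d := by
  by_contra hncd
  have hndc : ¬G.Adj d c := fun h => hncd h.symm
  have hK : ∀ i j : Fin 4, K4minus.Adj i j ↔ i ≠ j ∧ ¬(i = 0 ∧ j = 1 ∨ i = 1 ∧ j = 0) := by
    simp [K4minus]
  let f : Fin 4 → V := ![c, d, a, b]
  have hf : Function.Injective f := by
    intro i j hij
    fin_cases i <;> fin_cases j <;>
      simp_all [f, hac.ne', hbc.ne', had.ne', hbd.ne', hab.ne, hcd.symm]
  have hadj : ∀ i j, G.Adj (f i) (f j) ↔ K4minus.Adj i j := by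
    intro i j
    fin_cases i <;> fin_cases j <;> simp [f, hK, hab, hac, hbc, had, hbd, hncd, hndc, hab.symm,
      hac.symm, hbc.symm, had.symm, hbd.symm]
  exact hG.false ⟨⟨f, hf⟩, hadj _ _⟩

theorem adj_of_isClique_of_isEmpty_k4minus_embedding (hG : IsEmpty (K4minus ↪g G))
    {s : Set V} (hs : G.IsClique s) {u v w t : V} (hu : u ∈ s) (hv : v ∈ s) (huv : u ≠ v)
    (huw : G.Adj u w) (hvw : G.Adj v w) (ht : t ∈ s) (htw : t ≠ w) : G.Adj t w := by
  by_cases htu : t = u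
  · exact htu ▸ huw
  by_cases htv : t = v
  · exact htv ▸ hvw
  exact adj_of_isEmpty_k4minus_embedding hG (hs hu hv huv) (hs hu ht (Ne.symm htu))
    (hs hv ht (Ne.symm htv)) huw hvw htw

variable [Fintype V]

open scoped Classical in
/-- For an edge in no triangle this is just its two ends; in a graph with no induced `K₄⁻` it is
otherwise the unique maximal clique containing the edge. -/
noncomputable def triangleBlock (G : SimpleGraph V) (e : Sym2 V) : Finset V :=
  {z | z ∈ e ∨ ∀ v ∈ e, G.Adj v z}

theorem mem_triangleBlock {e : Sym2 V} {z : V} :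
    z ∈ triangleBlock G e ↔ z ∈ e ∨ ∀ v ∈ e, G.Adj v z := by
  simp [triangleBlock]

theorem mem_sym2_triangleBlock_self (e : Sym2 V) : e ∈ (triangleBlock G e).sym2 :=
  mem_sym2_iff.2 fun _ hv => mem_triangleBlock.2 (Or.inl hv)

theorem isClique_triangleBlock (hG : IsEmpty (K4minus ↪g G)) {e : Sym2 V}
    (he : e ∈ G.edgeSet) : G.IsClique (triangleBlock G e : Set V) := by
  induction e using Sym2.ind with
  | _ x y =>
  intro u hu v hv huv
  simp only [mem_coe, mem_triangleBlock, Sym2.mem_iff, forall_eq_or_imp, forall_eq] at hu hv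
  rw [mem_edgeSet] at he
  rcases hu with (rfl | rfl) | ⟨hxu, hyu⟩ <;> rcases hv with (rfl | rfl) | ⟨hxv, hyv⟩
  all_goals first
    | exact absurd rfl huv
    | assumption
    | exact he.symm
    | exact hxu.symm
    | exact hyu.symm
    | exact adj_of_isEmpty_k4minus_embedding hG he hxu hyu hxv hyv huv

theorem triangleBlock_eq_of_mem_sym2 (hG : IsEmpty (K4minus ↪g G)) {e e' : Sym2 V}
    (he : e ∈ G.edgeSet) (he' : e' ∈ G.edgeSet) (h : e' ∈ (triangleBlock G e).sym2) :
    triangleBlock G e' = triangleBlock G e := by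
  have hQ := isClique_triangleBlock hG he
  induction e' using Sym2.ind with
  | _ u v =>
  rw [mk_mem_sym2_iff] at h
  rw [mem_edgeSet] at he'
  ext w
  by_cases hw : w = u ∨ w = v
  · have hwe' : w ∈ s(u, v) := Sym2.mem_iff.2 hw
    rcases hw with rfl | rfl
    exacts [iff_of_true (mem_triangleBlock.2 (Or.inl hwe')) h.1,
      iff_of_true (mem_triangleBlock.2 (Or.inl hwe')) h.2]
  simp only [not_or] at hw
  simp only [mem_triangleBlock (e := s(u, v)), Sym2.mem_iff, forall_eq_or_imp, forall_eq, hw,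
    false_or]
  constructor
  · rintro ⟨huw, hvw⟩
    refine mem_triangleBlock.2 (or_iff_not_imp_left.2 fun hwe t ht => ?_)
    exact adj_of_isClique_of_isEmpty_k4minus_embedding hG hQ h.1 h.2 he'.ne huw hvw
      (mem_triangleBlock.2 (Or.inl ht)) (by rintro rfl; exact hwe ht)
  · intro hwQ
    exact ⟨hQ h.1 hwQ (Ne.symm hw.1), hQ h.2 hwQ (Ne.symm hw.2)⟩

theorem filter_triangleBlock_eq [DecidableEq V] [DecidableRel G.Adj]
    (hG : IsEmpty (K4minus ↪g G)) {S : Finset (Sym2 V)} (hS : S ⊆ G.edgeFinset) {e : Sym2 V}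
    (he : e ∈ G.edgeSet) :
    {e' ∈ S | triangleBlock G e' = triangleBlock G e} = S ∩ (triangleBlock G e).sym2 := by
  ext e'
  simp only [mem_filter, mem_inter, and_congr_right_iff]
  intro he'S
  have he' : e' ∈ G.edgeSet := mem_edgeFinset.1 (hS he'S)
  exact ⟨fun h => h ▸ mem_sym2_triangleBlock_self e',
    triangleBlock_eq_of_mem_sym2 hG he he'⟩

theorem card_eq_sum_card_inter_sym2_triangleBlock [DecidableEq V] [DecidableRel G.Adj]
    (hG : IsEmpty (K4minus ↪g G)) {S : Finset (Sym2 V)} (hS : S ⊆ G.edgeFinset) :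
    #S = ∑ Q ∈ G.edgeFinset.image (triangleBlock G), #(S ∩ Q.sym2) := by
  rw [card_eq_sum_card_fiberwise fun e he => mem_image_of_mem (triangleBlock G) (hS he)]
  refine sum_congr rfl fun Q hQ => ?_
  obtain ⟨e, he, rfl⟩ := mem_image.1 hQ
  rw [filter_triangleBlock_eq hG hS (mem_edgeFinset.1 he)]

open scoped Classical in
noncomputable def sameSideEdges (G : SimpleGraph V) [DecidableEq V] [DecidableRel G.Adj]
    (H : Finset V → Finset V) : Finset (Sym2 V) :=
  {e ∈ G.edgeFinset |
    ∀ u ∈ e, ∀ v ∈ e, (u ∈ H (triangleBlock G e) ↔ v ∈ H (triangleBlock G e))}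

variable [DecidableEq V] [DecidableRel G.Adj] {H : Finset V → Finset V}

theorem sameSideEdges_subset_edgeFinset : sameSideEdges G H ⊆ G.edgeFinset :=
  filter_subset _ _

theorem mk_mem_sameSideEdges {a b : V} (hab : G.Adj a b) :
    s(a, b) ∈ sameSideEdges G H ↔
      (a ∈ H (triangleBlock G s(a, b)) ↔ b ∈ H (triangleBlock G s(a, b))) := by
  simp only [sameSideEdges, mem_filter, mem_edgeFinset, mem_edgeSet, hab, true_and,
    Sym2.mem_iff, forall_eq_or_imp, forall_eq]
  tauto

theorem cliqueFree_three_deleteEdges_sameSideEdges (hG : IsEmpty (K4minus ↪g G))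
    (H : Finset V → Finset V) : (G.deleteEdges (sameSideEdges G H)).CliqueFree 3 := by
  intro t ht
  obtain ⟨x, y, z, hxy, hxz, hyz, rfl⟩ := is3Clique_iff.1 ht
  simp only [deleteEdges_adj, mem_coe] at hxy hxz hyz
  set Q := triangleBlock G s(x, y)
  have hx : x ∈ Q := mem_triangleBlock.2 (Or.inl (Sym2.mem_mk_left x y))
  have hy : y ∈ Q := mem_triangleBlock.2 (Or.inl (Sym2.mem_mk_right x y))
  have hz : z ∈ Q := mem_triangleBlock.2 (Or.inr (by simp [hxz.1, hyz.1]))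
  have hxzQ : triangleBlock G s(x, z) = Q :=
    triangleBlock_eq_of_mem_sym2 hG hxy.1 hxz.1 (mk_mem_sym2_iff.2 ⟨hx, hz⟩)
  have hyzQ : triangleBlock G s(y, z) = Q :=
    triangleBlock_eq_of_mem_sym2 hG hxy.1 hyz.1 (mk_mem_sym2_iff.2 ⟨hy, hz⟩)
  rw [mk_mem_sameSideEdges hxy.1] at hxy
  rw [mk_mem_sameSideEdges hxz.1, hxzQ] at hxz
  rw [mk_mem_sameSideEdges hyz.1, hyzQ] at hyz
  tauto

theorem card_sameSideEdges_inter_sym2 (hG : IsEmpty (K4minus ↪g G)) {e : Sym2 V}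
    (he : e ∈ G.edgeSet) (hH : H (triangleBlock G e) ⊆ triangleBlock G e) :
    #(sameSideEdges G H ∩ (triangleBlock G e).sym2) =
      (#(H (triangleBlock G e))).choose 2 +
        (#(triangleBlock G e) - #(H (triangleBlock G e))).choose 2 := by
  set Q := triangleBlock G e
  have hQ := isClique_triangleBlock hG he
  have hsplit : sameSideEdges G H ∩ Q.sym2 =
      G.edgeFinset ∩ (H Q).sym2 ∪ G.edgeFinset ∩ (Q \ H Q).sym2 := by
    ext e'
    induction e' using Sym2.ind with
    | _ a b =>
    simp only [mem_inter, mem_union, mk_mem_sym2_iff, mem_sdiff, mem_edgeFinset, mem_edgeSet]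
    by_cases hab : G.Adj a b
    · have hHa := @hH a
      have hHb := @hH b
      by_cases habQ : a ∈ Q ∧ b ∈ Q
      · rw [mk_mem_sameSideEdges hab,
          triangleBlock_eq_of_mem_sym2 hG he hab (mk_mem_sym2_iff.2 habQ)]
        tauto
      · tauto
    · simp [sameSideEdges, hab]
  have hdisj : Disjoint (G.edgeFinset ∩ (H Q).sym2) (G.edgeFinset ∩ (Q \ H Q).sym2) := by
    rw [Finset.disjoint_left]
    intro e' he'H he'Q
    obtain ⟨v, hv⟩ : ∃ v, v ∈ e' := ⟨_, Sym2.out_fst_mem e'⟩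
    exact (mem_sdiff.1 (mem_sym2_iff.1 (mem_inter.1 he'Q).2 v hv)).2
      (mem_sym2_iff.1 (mem_inter.1 he'H).2 v hv)
  rw [hsplit, card_union_of_disjoint hdisj,
    (hQ.subset (coe_subset.2 hH)).card_edgeFinset_inter_sym2,
    (hQ.subset (coe_subset.2 sdiff_subset)).card_edgeFinset_inter_sym2, card_sdiff_of_subset hH]

theorem card_add_two_mul_card_sameSideEdges_le (hG : IsEmpty (K4minus ↪g G))
    {A : Finset (Sym2 V)} (hA : TriIndep G A) (hH : ∀ Q, H Q ⊆ Q ∧ #(H Q) = #Q / 2) :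
    #A + 2 * #(sameSideEdges G H) ≤ #G.edgeFinset := by
  have hAE : A ⊆ G.edgeFinset := fun e he => mem_edgeFinset.2 (hA.1 he)
  rw [card_eq_sum_card_inter_sym2_triangleBlock hG hAE,
    card_eq_sum_card_inter_sym2_triangleBlock hG sameSideEdges_subset_edgeFinset,
    card_eq_sum_card_inter_sym2_triangleBlock hG subset_rfl, mul_sum, ← sum_add_distrib]
  refine sum_le_sum fun Q hQ => ?_
  obtain ⟨e, he, rfl⟩ := mem_image.1 hQ
  rw [mem_edgeFinset] at he
  have hclique := isClique_triangleBlock hG he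
  rw [card_sameSideEdges_inter_sym2 hG he (hH _).1, (hH _).2,
    hclique.card_edgeFinset_inter_sym2,
    ← Nat.div_two_add_two_mul_choose_two_add_choose_two #(triangleBlock G e)]
  exact Nat.add_le_add_right (hA.card_inter_sym2_le hclique) _

theorem exists_cliqueFree_three_deleteEdges_four_mul_card_add_card_le
    (hG : IsEmpty (K4minus ↪g G)) {A : Finset (Sym2 V)} (hA : TriIndep G A) :
    ∃ X ⊆ G.edgeFinset, (G.deleteEdges X).CliqueFree 3 ∧
      4 * (#A + #X) ≤ Fintype.card V ^ 2 := by
  choose H hH using fun Q : Finset V => exists_subset_card_eq (Nat.div_le_self #Q 2)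
  have hfree := cliqueFree_three_deleteEdges_sameSideEdges hG H
  refine ⟨sameSideEdges G H, sameSideEdges_subset_edgeFinset, hfree, ?_⟩
  have hcount := card_add_two_mul_card_sameSideEdges_le hG hA hH
  have hmantel := hfree.four_mul_card_edgeFinset_le
  rw [edgeFinset_deleteEdges, card_sdiff_of_subset sameSideEdges_subset_edgeFinset] at hmantel
  omega

end SimpleGraph

open SimpleGraph

theorem exists_triIndep_card_eq_alpha1 {V : Type*} [Fintype V] (G : SimpleGraph V) :
    ∃ A, TriIndep G A ∧ #A = alpha1 G :=
  Nat.sSup_mem (s := {k | ∃ A : Finset (Sym2 V), TriIndep G A ∧ #A = k})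
    ⟨0, ∅, ⟨by simp, by simp⟩, rfl⟩
    ⟨Fintype.card (Sym2 V), by rintro k ⟨A, -, rfl⟩; exact card_le_univ A⟩

theorem tau_le_card {V : Type*} [Fintype V] {G : SimpleGraph V} {X : Finset (Sym2 V)}
    (hX : (X : Set (Sym2 V)) ⊆ G.edgeSet) (hfree : (G.deleteEdges X).CliqueFree 3) :
    tau G ≤ #X :=
  Nat.sInf_le ⟨X, hX, hfree, rfl⟩

/-- If `G` is an `n`-vertex graph with no induced subgraph isomorphic to `K₄⁻`
(the complete graph on four vertices minus an edge), then `α₁(G) + τ(G) ≤ n²/4`. -/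
theorem stmt14 {V : Type*} [Fintype V] (G : SimpleGraph V)
    (h : IsEmpty (K4minus ↪g G)) :
    (alpha1 G + tau G : ℝ) ≤ (Fintype.card V : ℝ) ^ 2 / 4 := by
  classical
  obtain ⟨A, hA, hAcard⟩ := exists_triIndep_card_eq_alpha1 G
  obtain ⟨X, hXE, hfree, hcard⟩ :=
    exists_cliqueFree_three_deleteEdges_four_mul_card_add_card_le h hA
  have htau : tau G ≤ #X := tau_le_card (by rwa [← coe_subset, coe_edgeFinset] at hXE) hfree
  rw [← hAcard, le_div_iff₀ four_pos]
  exact_mod_cast (by omega : (#A + tau G) * 4 ≤ Fintype.card V ^ 2)
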